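/- For every n ≥ 0, T(F^n) = U(F^n) + G^n lies in the Z/2-linear span of the powers F^k with k + 4 ≤ n and k ≡ n (mod 2). In particular T maps the subring Z/2[F] into itself. -/

import Mathlib

/-!
Over `ZMod 2` put `s = r(r+1)` and `a = r^4`. Since `(r+1)^4 = a + 1` we get `F = s(a+1)`, `G = sa`
and `s^4 = a(a+1)`, so `F + G = s` and `FG = s^6 = (F+G)^6`. Expanding `(F+G)^6 = (F^2+G^2)^3`
turns this into `F^6 = G^2F^4 + G^4F^2 + GF + G^6` and the same with `F` and `G` exchanged.
Because the `G^k r^i` span `R`, `U(G^j p) = F^j U(p)` for every `p`; applying `U` to the first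
relation times `F^m` and adding the second one times `G^m` gives
`T(F^(m+6)) = F^2 T(F^(m+4)) + F^4 T(F^(m+2)) + F T(F^(m+1)) + F^6 T(F^m)`,
which preserves the spans in question. Induction starts from `T(F^n) = 0` for `n ≤ 4` and
`T(F^5) = F`.
-/

open Polynomial

noncomputable section

/-- `F = r(r+1)^5` in `(ZMod 2)[r]`. -/
def Fp : Polynomial (ZMod 2) := X * (X + 1) ^ 5

/-- `G = r^5(r+1)` in `(ZMod 2)[r]`. -/
def Gp : Polynomial (ZMod 2) := X ^ 5 * (X + 1)

/-- The images `v_0, …, v_5` of `1, r, …, r^5` under `U`. -/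
def v : ℕ → Polynomial (ZMod 2)
  | 0 => 1
  | 1 => X
  | 2 => X ^ 2
  | 3 => X ^ 3 + X ^ 2 + X
  | 4 => X ^ 4
  | 5 => X ^ 5 + X ^ 4 + X
  | _ => 0

/-- `U` is the unique `ZMod 2`-linear map with `U (G^k r^i) = F^k v_i` for `0 ≤ i ≤ 5`. -/
def IsU (U : Polynomial (ZMod 2) →ₗ[ZMod 2] Polynomial (ZMod 2)) : Prop :=
  ∀ k i : ℕ, i ≤ 5 → U (Gp ^ k * X ^ i) = Fp ^ k * v i

namespace Polynomial

variable {R : Type*} [CommRing R]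

theorem span_pow_mul_X_pow_eq_top {g : R[X]} (hg : g.Monic) (hd : 0 < g.natDegree) :
    Submodule.span R {p | ∃ k i, i < g.natDegree ∧ p = g ^ k * X ^ i} = ⊤ := by
  set S := Submodule.span R {p | ∃ k i, i < g.natDegree ∧ p = g ^ k * X ^ i}
  have mem_S (k i : ℕ) (hi : i < g.natDegree) : g ^ k * X ^ i ∈ S :=
    Submodule.subset_span ⟨k, i, hi, rfl⟩
  have X_mul_mem (p : R[X]) (hp : p ∈ S) : X * p ∈ S := by
    induction hp using Submodule.span_induction with
    | mem p hp =>
      obtain ⟨k, i, hi, rfl⟩ := hp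
      rcases Nat.lt_or_ge (i + 1) g.natDegree with hi' | hi'
      · rw [show X * (g ^ k * X ^ i) = g ^ k * X ^ (i + 1) by ring]
        exact mem_S k (i + 1) hi'
      · have hX : X ^ g.natDegree = g - ∑ j ∈ Finset.range g.natDegree, C (g.coeff j) * X ^ j :=
          eq_sub_of_add_eq hg.as_sum.symm
        have hXg : X * (g ^ k * X ^ i) =
            g ^ (k + 1) * X ^ 0 - ∑ j ∈ Finset.range g.natDegree, g.coeff j • (g ^ k * X ^ j) := by
          calc X * (g ^ k * X ^ i) = g ^ k * X ^ g.natDegree := by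
                rw [Nat.le_antisymm hi' hi]; ring
            _ = _ := by
              rw [hX, mul_sub, Finset.mul_sum, pow_succ, pow_zero, mul_one]
              simp only [smul_eq_C_mul, mul_left_comm]
        rw [hXg]
        exact sub_mem (mem_S _ _ hd) (Submodule.sum_mem _ fun j hj =>
          S.smul_mem _ (mem_S k j (Finset.mem_range.1 hj)))
    | zero => simp
    | add p q _ _ hp hq => simpa [mul_add] using S.add_mem hp hq
    | smul a p _ hp => simpa [mul_smul_comm] using S.smul_mem a hp
  refine Submodule.eq_top_iff'.2 fun p => p.induction_on (fun a => ?_) (fun p q => S.add_mem)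
    fun n a hp => ?_
  · simpa [smul_eq_C_mul] using S.smul_mem a (mem_S 0 0 hd)
  · convert X_mul_mem _ hp using 1
    ring

end Polynomial

section Recurrence

variable {A : Type*} [CommRing A] [CharP A 2]

theorem pow_six_eq_of_mul_eq_add_pow_six {f g : A} (h : f * g = (f + g) ^ 6) :
    f ^ 6 = g ^ 2 * f ^ 4 + g ^ 4 * f ^ 2 + g * f + g ^ 6 := by
  refine CharTwo.add_eq_zero.mp ?_
  calc f ^ 6 + (g ^ 2 * f ^ 4 + g ^ 4 * f ^ 2 + g * f + g ^ 6)
      = (f ^ 2 + g ^ 2) ^ 2 * (f ^ 2 + g ^ 2) + f * g := by simp only [CharTwo.add_sq]; ring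
    _ = (f + g) ^ 6 + f * g := by rw [← CharTwo.add_sq]; ring
    _ = 0 := by rw [← h, CharTwo.add_self_eq_zero]

variable {Φ : Type*} [FunLike Φ A A] [AddHomClass Φ A A]

theorem map_pow_add_pow_add_six {f g : A} (h : f * g = (f + g) ^ 6) {U : Φ}
    (hU : ∀ j x, U (g ^ j * x) = f ^ j * U x) (m : ℕ) :
    U (f ^ (m + 6)) + g ^ (m + 6) =
      f ^ 2 * (U (f ^ (m + 4)) + g ^ (m + 4)) + f ^ 4 * (U (f ^ (m + 2)) + g ^ (m + 2)) +
        f * (U (f ^ (m + 1)) + g ^ (m + 1)) + f ^ 6 * (U (f ^ m) + g ^ m) := by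
  have hf : f ^ (m + 6) =
      g ^ 2 * f ^ (m + 4) + g ^ 4 * f ^ (m + 2) + g ^ 1 * f ^ (m + 1) + g ^ 6 * f ^ m := by
    rw [pow_add, pow_six_eq_of_mul_eq_add_pow_six h]; ring
  have hg : g ^ (m + 6) =
      f ^ 2 * g ^ (m + 4) + f ^ 4 * g ^ (m + 2) + f * g ^ (m + 1) + f ^ 6 * g ^ m := by
    rw [pow_add, pow_six_eq_of_mul_eq_add_pow_six (by rw [mul_comm, add_comm, h])]; ring
  rw [hf, hg]
  simp only [map_add, hU]
  ring

end Recurrence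

section LowerPowSpan

variable (K : Type*) {A : Type*} [CommSemiring K]

def lowerPowSpan [CommSemiring A] [Algebra K A] (f : A) (n : ℕ) : Submodule K A :=
  Submodule.span K {p | ∃ k, k + 4 ≤ n ∧ k % 2 = n % 2 ∧ p = f ^ k}

variable {K}

theorem pow_mul_mem_lowerPowSpan [CommSemiring A] [Algebra K A] {f x : A} {m j n : ℕ}
    (hle : m + j ≤ n) (hpar : (m + j) % 2 = n % 2) (hx : x ∈ lowerPowSpan K f m) :
    f ^ j * x ∈ lowerPowSpan K f n := by
  induction hx using Submodule.span_induction with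
  | mem p hp =>
    obtain ⟨k, hk, hkpar, rfl⟩ := hp
    exact Submodule.subset_span ⟨j + k, by omega, by omega, (pow_add f j k).symm⟩
  | zero => simp
  | add x y _ _ hx hy => simpa [mul_add] using add_mem hx hy
  | smul c x _ hx => simpa [mul_smul_comm] using Submodule.smul_mem _ c hx

variable {Φ : Type*} [CommRing A] [CharP A 2] [Algebra K A] [FunLike Φ A A] [AddHomClass Φ A A]

theorem map_pow_add_pow_mem_lowerPowSpan {f g : A} (h : f * g = (f + g) ^ 6) {U : Φ}
    (hU : ∀ j x, U (g ^ j * x) = f ^ j * U x) (h_le_four : ∀ n ≤ 4, U (f ^ n) = g ^ n)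
    (h_five : U (f ^ 5) = g ^ 5 + f) (n : ℕ) : U (f ^ n) + g ^ n ∈ lowerPowSpan K f n := by
  induction n using Nat.strong_induction_on with
  | _ n ih =>
  rcases Nat.lt_or_ge n 6 with hn | hn
  · rcases Nat.lt_or_ge n 5 with hn' | hn'
    · simp [h_le_four n (by omega), CharTwo.add_self_eq_zero]
    · obtain rfl : n = 5 := by omega
      rw [h_five, add_right_comm, CharTwo.add_self_eq_zero, zero_add]
      exact Submodule.subset_span ⟨1, by norm_num, by norm_num, (pow_one f).symm⟩
  · obtain ⟨m, rfl⟩ := Nat.exists_eq_add_of_le' hn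
    rw [map_pow_add_pow_add_six h hU]
    refine add_mem (add_mem (add_mem ?_ ?_) ?_) ?_
    · exact pow_mul_mem_lowerPowSpan (by omega) (by omega) (ih (m + 4) (by omega))
    · exact pow_mul_mem_lowerPowSpan (by omega) (by omega) (ih (m + 2) (by omega))
    · simpa using pow_mul_mem_lowerPowSpan (j := 1) (by omega) (by omega) (ih (m + 1) (by omega))
    · exact pow_mul_mem_lowerPowSpan (by omega) (by omega) (ih m (by omega))

end LowerPowSpan

theorem Fp_mul_Gp : Fp * Gp = (Fp + Gp) ^ 6 := by
  unfold Fp Gp; ring_nf; reduce_mod_char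

theorem monic_Gp : Gp.Monic := (monic_X_pow 5).mul (monic_X_add_C 1)

theorem natDegree_Gp : Gp.natDegree = 6 := by
  unfold Gp; compute_degree!

section IsU

variable {U : Polynomial (ZMod 2) →ₗ[ZMod 2] Polynomial (ZMod 2)}

theorem IsU.map_Gp_pow_mul (hU : IsU U) (j : ℕ) (p : Polynomial (ZMod 2)) :
    U (Gp ^ j * p) = Fp ^ j * U p := by
  have hp : p ∈ Submodule.span (ZMod 2) {p | ∃ k i, i < Gp.natDegree ∧ p = Gp ^ k * X ^ i} := by
    rw [span_pow_mul_X_pow_eq_top monic_Gp (by rw [natDegree_Gp]; norm_num)]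
    trivial
  induction hp using Submodule.span_induction with
  | mem p hp =>
    obtain ⟨k, i, hi, rfl⟩ := hp
    rw [natDegree_Gp] at hi
    rw [← mul_assoc, ← pow_add, hU _ _ (by omega), hU _ _ (by omega), pow_add, mul_assoc]
  | zero => simp
  | add p q _ _ hp hq => simp [mul_add, hp, hq]
  | smul c p _ hp => simp [hp]

theorem IsU.map_Fp_pow_of_le_four (hU : IsU U) : ∀ n ≤ 4, U (Fp ^ n) = Gp ^ n := by
  have e1 : Fp ^ 1 = Gp ^ 0 * X ^ 1 + Gp ^ 0 * X ^ 2 + Gp ^ 1 * X ^ 0 := by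
    unfold Fp Gp; ring_nf; reduce_mod_char
  have e2 : Fp ^ 2 = Gp ^ 0 * X ^ 2 + Gp ^ 0 * X ^ 4 + Gp ^ 2 * X ^ 0 := by
    unfold Fp Gp; ring_nf; reduce_mod_char
  have e3 : Fp ^ 3 = Gp ^ 0 * X ^ 3 + Gp ^ 0 * X ^ 4 + Gp ^ 1 * X ^ 0 + Gp ^ 1 * X ^ 2 +
      Gp ^ 1 * X ^ 4 + Gp ^ 2 * X ^ 1 + Gp ^ 2 * X ^ 2 + Gp ^ 3 * X ^ 0 := by
    unfold Fp Gp; ring_nf; reduce_mod_char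
  have e4 : Fp ^ 4 = Gp ^ 0 * X ^ 4 + Gp ^ 0 * X ^ 5 + Gp ^ 1 * X ^ 0 + Gp ^ 1 * X ^ 1 +
      Gp ^ 1 * X ^ 2 + Gp ^ 4 * X ^ 0 := by
    unfold Fp Gp; ring_nf; reduce_mod_char
  unfold IsU at hU
  intro n hn
  interval_cases n
  · simpa [v] using hU 0 0 (by norm_num)
  all_goals
    simp (disch := norm_num) only [e1, e2, e3, e4, map_add, hU, v]
    simp only [Gp]; ring_nf; reduce_mod_char

theorem IsU.map_Fp_pow_five (hU : IsU U) : U (Fp ^ 5) = Gp ^ 5 + Fp := by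
  have e5 : Fp ^ 5 = Gp ^ 1 * X ^ 0 + Gp ^ 1 * X ^ 5 + Gp ^ 2 * X ^ 0 + Gp ^ 2 * X ^ 1 +
      Gp ^ 2 * X ^ 2 + Gp ^ 4 * X ^ 1 + Gp ^ 4 * X ^ 2 + Gp ^ 5 * X ^ 0 := by
    unfold Fp Gp; ring_nf; reduce_mod_char
  unfold IsU at hU
  simp (disch := norm_num) only [e5, map_add, hU, v]
  unfold Fp Gp; ring_nf; reduce_mod_char

end IsU

theorem T_span (U : Polynomial (ZMod 2) →ₗ[ZMod 2] Polynomial (ZMod 2)) (hU : IsU U) (n : ℕ) :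
    U (Fp ^ n) + Gp ^ n ∈
      Submodule.span (ZMod 2)
        {p : Polynomial (ZMod 2) | ∃ k : ℕ, k + 4 ≤ n ∧ k % 2 = n % 2 ∧ p = Fp ^ k} :=
  map_pow_add_pow_mem_lowerPowSpan Fp_mul_Gp hU.map_Gp_pow_mul hU.map_Fp_pow_of_le_four
    hU.map_Fp_pow_five n

end
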